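/- C_0 is a monotone under selective incoherent operations: if {K_n} is a finite set of incoherent-preserving matrices with Σ_n K_n† K_n = I, then for every state ρ, writing p_n = Tr[K_n ρ K_n†] and ρ_n = K_n ρ K_n†/p_n for those n with p_n > 0, one has Σ_{n : p_n>0} p_n C_0(ρ_n) ≤ C_0(ρ). -/

import Mathlib

/-!
An incoherent-preserving `K` has at most one nonzero entry in each column (test it on the
incoherent state `|i⟩⟨i|`), so it cannot increase the number `T` of nonzero coordinates of a
vector. A pure-state decomposition `ρ = Σ p_j |ψ_j⟩⟨ψ_j|` is therefore carried to
`K ρ K† = Σ p_j |K ψ_j⟩⟨K ψ_j|`, which after discarding the zero vectors and normalising the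
others is a decomposition of `ρ_n` with `max_j T ≤ max_j T(ψ_j)`. So every `C_0(ρ_n)` is at most
`max_j log₂ T(ψ_j)`, and since the `p_n` sum to `1`, so is their average; minimising over the
decompositions of `ρ` gives the claim.
-/

open scoped Matrix ComplexOrder

namespace OneShot

variable {ι κ : Type*} [Fintype ι] [DecidableEq ι] [Fintype κ] [DecidableEq κ]

/-- A quantum state: a positive semidefinite matrix with unit trace. -/
def IsState (ρ : Matrix ι ι ℂ) : Prop := ρ.PosSemidef ∧ ρ.trace = 1

/-- An incoherent state: a state that is diagonal in the computational basis. -/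
def IsIncoherent (ρ : Matrix ι ι ℂ) : Prop := IsState ρ ∧ ρ.IsDiag

/-- The completely dephasing channel `Δ`. -/
def dephase (ρ : Matrix ι ι ℂ) : Matrix ι ι ℂ := Matrix.diagonal fun i => ρ i i

/-- The max-relative entropy of coherence
`C_max(ρ) = min_{δ ∈ 𝓘} D_max(ρ‖δ) = log₂ min {λ ≥ 0 | ∃ δ ∈ 𝓘, ρ ≤ λ δ}`. -/
noncomputable def Cmax (ρ : Matrix ι ι ℂ) : ℝ :=
  Real.logb 2 (sInf {l : ℝ | 0 ≤ l ∧ ∃ δ, IsIncoherent δ ∧ (l • δ - ρ).PosSemidef})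

/-- `C_{Δ,max}(ρ) = log₂ min {λ ≥ 0 | ρ ≤ λ Δ(ρ)}`. -/
noncomputable def CDmax (ρ : Matrix ι ι ℂ) : ℝ :=
  Real.logb 2 (sInf {l : ℝ | 0 ≤ l ∧ (l • dephase ρ - ρ).PosSemidef})

/-- Complete positivity of a linear map on matrices. -/
def CompletelyPositive (Λ : Matrix ι ι ℂ →ₗ[ℂ] Matrix κ κ ℂ) : Prop :=
  ∀ (k : ℕ) (M : Matrix (Fin k × ι) (Fin k × ι) ℂ), M.PosSemidef →
    (Matrix.of fun p q : Fin k × κ =>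
      Λ (Matrix.of fun x y => M (p.1, x) (q.1, y)) p.2 q.2).PosSemidef

/-- Trace preservation. -/
def TracePreserving (Λ : Matrix ι ι ℂ →ₗ[ℂ] Matrix κ κ ℂ) : Prop :=
  ∀ A, (Λ A).trace = A.trace

/-- A maximally incoherent operation (MIO): a CPTP map sending every incoherent state
to an incoherent state. -/
def IsMIO (Λ : Matrix ι ι ℂ →ₗ[ℂ] Matrix κ κ ℂ) : Prop :=
  CompletelyPositive Λ ∧ TracePreserving Λ ∧ ∀ δ, IsIncoherent δ → IsIncoherent (Λ δ)

/-- A dephasing-covariant incoherent operation (DIO): a CPTP map commuting with `Δ`. -/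
def IsDIO (Λ : Matrix ι ι ℂ →ₗ[ℂ] Matrix ι ι ℂ) : Prop :=
  CompletelyPositive Λ ∧ TracePreserving Λ ∧ ∀ ρ, Λ (dephase ρ) = dephase (Λ ρ)

/-- An incoherent-preserving (Kraus) operator: `K δ Kᴴ` is a nonnegative multiple of an
incoherent state, for every incoherent state `δ`. -/
def IncoherentPreserving (K : Matrix κ ι ℂ) : Prop :=
  ∀ δ : Matrix ι ι ℂ, IsIncoherent δ →
    ∃ c : ℝ, 0 ≤ c ∧ ∃ δ' : Matrix κ κ ℂ, IsIncoherent δ' ∧ K * δ * Kᴴ = (c : ℂ) • δ'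

/-- An incoherent operation (IO). -/
def IsIO (Λ : Matrix ι ι ℂ →ₗ[ℂ] Matrix κ κ ℂ) : Prop :=
  ∃ (N : ℕ) (K : Fin N → Matrix κ ι ℂ),
    (∀ n, IncoherentPreserving (K n)) ∧ (∑ n, (K n)ᴴ * K n = 1) ∧
    ∀ ρ, Λ ρ = ∑ n, K n * ρ * (K n)ᴴ

/-- A strictly incoherent operation (SIO). -/
def IsSIO (Λ : Matrix ι ι ℂ →ₗ[ℂ] Matrix κ κ ℂ) : Prop :=
  ∃ (N : ℕ) (K : Fin N → Matrix κ ι ℂ),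
    (∀ n, IncoherentPreserving (K n)) ∧ (∀ n, IncoherentPreserving (K n)ᴴ) ∧
    (∑ n, (K n)ᴴ * K n = 1) ∧ ∀ ρ, Λ ρ = ∑ n, K n * ρ * (K n)ᴴ

/-- The outer product `|ψ⟩⟨ψ|`. -/
def outer (ψ : ι → ℂ) : Matrix ι ι ℂ := Matrix.of fun i j => ψ i * star (ψ j)

/-- `T ψ` is the number of nonzero computational-basis coefficients of `ψ`. -/
noncomputable def T (ψ : ι → ℂ) : ℕ := (Finset.univ.filter fun i => ψ i ≠ 0).card

/-- A finite pure-state decomposition `ρ = Σ_j p_j |ψ_j⟩⟨ψ_j|`. -/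
def IsDecomposition (ρ : Matrix ι ι ℂ) (n : ℕ) (p : Fin n → ℝ) (ψ : Fin n → ι → ℂ) : Prop :=
  (∀ j, 0 < p j) ∧ (∑ j, p j = 1) ∧ (∀ j, ∑ i, Complex.normSq (ψ j i) = 1) ∧
    ρ = ∑ j, p j • outer (ψ j)

/-- `C_0(ρ) = min over decompositions of max_j log₂ T(ψ_j)`. -/
noncomputable def C0 (ρ : Matrix ι ι ℂ) : ℝ :=
  sInf { r | ∃ n p ψ, IsDecomposition ρ n p ψ ∧
    r = Real.logb 2 (↑(Finset.univ.sup fun j => T (ψ j)) : ℝ) }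

/-- Matrix square root of a positive semidefinite matrix (junk value `0` elsewhere). -/
noncomputable def msqrt (A : Matrix ι ι ℂ) : Matrix ι ι ℂ :=
  letI := Classical.propDecidable A.PosSemidef
  if h : A.PosSemidef then
    (h.1.eigenvectorUnitary : Matrix ι ι ℂ) *
      Matrix.diagonal ((↑) ∘ (Real.sqrt ∘ h.1.eigenvalues)) *
      (star h.1.eigenvectorUnitary : Matrix ι ι ℂ)
  else 0

/-- Uhlmann fidelity `F(ρ,σ) = (Tr √(√ρ σ √ρ))²`. -/
noncomputable def Fid (ρ σ : Matrix ι ι ℂ) : ℝ :=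
  ((msqrt (msqrt ρ * σ * msqrt ρ)).trace.re) ^ 2

/-- Smoothed `C_max`. -/
noncomputable def Cmaxeps (ρ : Matrix ι ι ℂ) (ε : ℝ) : ℝ :=
  sInf { r | ∃ ρ', IsState ρ' ∧ 1 - ε ≤ Fid ρ ρ' ∧ r = Cmax ρ' }

/-- Smoothed `C_{Δ,max}`. -/
noncomputable def CDmaxeps (ρ : Matrix ι ι ℂ) (ε : ℝ) : ℝ :=
  sInf { r | ∃ ρ', IsState ρ' ∧ 1 - ε ≤ Fid ρ ρ' ∧ r = CDmax ρ' }

/-- Smoothed `C_0`. -/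
noncomputable def C0eps (ρ : Matrix ι ι ℂ) (ε : ℝ) : ℝ :=
  sInf { r | ∃ ρ', IsState ρ' ∧ 1 - ε ≤ Fid ρ ρ' ∧ r = C0 ρ' }

/-- The maximally coherent state `Ψ_M = |Ψ_M⟩⟨Ψ_M|` of dimension `M`. -/
noncomputable def PsiM (M : ℕ) : Matrix (Fin M) (Fin M) ℂ := Matrix.of fun _ _ => (1 : ℂ) / M

/-- One-shot coherence cost under MIO. -/
noncomputable def CMIOeps (ρ : Matrix ι ι ℂ) (ε : ℝ) : ℝ :=
  sInf { r | ∃ M : ℕ, 1 ≤ M ∧ r = Real.logb 2 M ∧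
    ∃ Λ : Matrix (Fin M) (Fin M) ℂ →ₗ[ℂ] Matrix ι ι ℂ, IsMIO Λ ∧ 1 - ε ≤ Fid ρ (Λ (PsiM M)) }

/-- One-shot coherence cost under DIO. -/
noncomputable def CDIOeps (ρ : Matrix ι ι ℂ) (ε : ℝ) : ℝ :=
  sInf { r | ∃ M : ℕ, 1 ≤ M ∧ r = Real.logb 2 M ∧
    ∃ Λ : Matrix (Fin M) (Fin M) ℂ →ₗ[ℂ] Matrix ι ι ℂ,
      CompletelyPositive Λ ∧ TracePreserving Λ ∧ (∀ ω, Λ (dephase ω) = dephase (Λ ω)) ∧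
      1 - ε ≤ Fid ρ (Λ (PsiM M)) }

/-- One-shot coherence cost under IO. -/
noncomputable def CIOeps (ρ : Matrix ι ι ℂ) (ε : ℝ) : ℝ :=
  sInf { r | ∃ M : ℕ, 1 ≤ M ∧ r = Real.logb 2 M ∧
    ∃ Λ : Matrix (Fin M) (Fin M) ℂ →ₗ[ℂ] Matrix ι ι ℂ, IsIO Λ ∧ 1 - ε ≤ Fid ρ (Λ (PsiM M)) }

/-- One-shot coherence cost under SIO. -/
noncomputable def CSIOeps (ρ : Matrix ι ι ℂ) (ε : ℝ) : ℝ :=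
  sInf { r | ∃ M : ℕ, 1 ≤ M ∧ r = Real.logb 2 M ∧
    ∃ Λ : Matrix (Fin M) (Fin M) ℂ →ₗ[ℂ] Matrix ι ι ℂ, IsSIO Λ ∧ 1 - ε ≤ Fid ρ (Λ (PsiM M)) }

/-- Matrix logarithm (base 2) via the spectral decomposition, with `log₂ 0 = 0` junk
convention on the kernel, and junk value `0` on non-Hermitian matrices. -/
noncomputable def mlog2 (A : Matrix ι ι ℂ) : Matrix ι ι ℂ :=
  letI := Classical.propDecidable A.IsHermitian
  if h : A.IsHermitian then
    (h.eigenvectorUnitary : Matrix ι ι ℂ) *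
      Matrix.diagonal (fun i => (Real.logb 2 (h.eigenvalues i) : ℂ)) *
      (h.eigenvectorUnitary : Matrix ι ι ℂ)ᴴ
  else 0

/-- The relative entropy of coherence `C_r(ρ) = min_{δ ∈ 𝓘} S(ρ‖δ)`, where the minimum
is (equivalently) restricted to those `δ` whose support contains the support of `ρ`,
on which `S(ρ‖δ) = Tr[ρ (log₂ ρ − log₂ δ)]` is finite. -/
noncomputable def Cr (ρ : Matrix ι ι ℂ) : ℝ :=
  sInf { r | ∃ δ, IsIncoherent δ ∧ (∀ v : ι → ℂ, δ.mulVec v = 0 → ρ.mulVec v = 0) ∧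
    r = ((ρ * (mlog2 ρ - mlog2 δ)).trace).re }

/-- Von Neumann entropy (base 2). -/
noncomputable def vN (σ : Matrix ι ι ℂ) : ℝ := -((σ * mlog2 σ).trace.re)

/-- The coherence of formation. -/
noncomputable def Cf (ρ : Matrix ι ι ℂ) : ℝ :=
  sInf { r | ∃ n p ψ, IsDecomposition ρ n p ψ ∧
    r = ∑ j, p j * vN (dephase (outer (ψ j))) }

/-- The set `A_ρ = { (1/t)[(1+t)Δ(ρ) − ρ] : t > 0, (1+t)Δ(ρ) − ρ ≥ 0 }`. -/
def Aset (ρ : Matrix ι ι ℂ) : Set (Matrix ι ι ℂ) :=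
  { σ | ∃ t : ℝ, 0 < t ∧ ((1 + t) • dephase ρ - ρ).PosSemidef ∧
      σ = t⁻¹ • ((1 + t) • dephase ρ - ρ) }

/-- The `n`-fold tensor power `ρ^{⊗ n}`. -/
def tpow (ρ : Matrix ι ι ℂ) (n : ℕ) : Matrix (Fin n → ι) (Fin n → ι) ℂ :=
  Matrix.of fun i j => ∏ t, ρ (i t) (j t)

end OneShot

open Finset Matrix
open scoped MatrixOrder

namespace OneShot

variable {ι κ : Type*}

lemma outer_zero : outer (0 : ι → ℂ) = 0 := by
  ext; simp [outer]

lemma outer_smul (r : ℝ) (ψ : ι → ℂ) : outer (r • ψ) = (r ^ 2) • outer ψ := by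
  ext i j
  simp only [outer, of_apply, Pi.smul_apply, Matrix.smul_apply, Complex.real_smul, star_mul',
    Complex.star_def, Complex.conj_ofReal]
  push_cast
  ring

lemma trace_outer [Fintype ι] (ψ : ι → ℂ) :
    (outer ψ).trace = ((∑ i, Complex.normSq (ψ i) : ℝ) : ℂ) := by
  simp [Matrix.trace, outer, Complex.mul_conj]

lemma mul_outer_mul_conjTranspose [Fintype ι] (K : Matrix κ ι ℂ) (ψ : ι → ℂ) :
    K * outer ψ * Kᴴ = outer (K *ᵥ ψ) := by
  change K * vecMulVec ψ (star ψ) * Kᴴ = vecMulVec (K *ᵥ ψ) (star (K *ᵥ ψ))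
  rw [mul_vecMulVec, vecMulVec_mul, star_mulVec]

lemma conjTranspose_mul_self_eq_sum_outer [Fintype κ] (B : Matrix κ ι ℂ) :
    Bᴴ * B = ∑ k, outer (star (B k)) := by
  ext i j
  simp [mul_apply, outer, Matrix.sum_apply]

lemma T_pos [Fintype ι] {ψ : ι → ℂ} (hψ : ψ ≠ 0) : 0 < T ψ := by
  obtain ⟨i, hi⟩ := Function.ne_iff.mp hψ
  exact card_pos.mpr ⟨i, by simpa using hi⟩

lemma T_smul [Fintype ι] {r : ℝ} (hr : r ≠ 0) (ψ : ι → ℂ) : T (r • ψ) = T ψ := by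
  simp [T, hr]

lemma T_mulVec_le [Fintype ι] [Fintype κ] {K : Matrix κ ι ℂ}
    (hcol : ∀ i a b, K a i ≠ 0 → K b i ≠ 0 → a = b) (ψ : ι → ℂ) : T (K *ᵥ ψ) ≤ T ψ := by
  classical
  have hsupp : univ.filter (fun a => (K *ᵥ ψ) a ≠ 0) ⊆
      (univ.filter fun i => ψ i ≠ 0).biUnion fun i => univ.filter fun a => K a i ≠ 0 := by
    intro a ha
    obtain ⟨i, -, hi⟩ := exists_ne_zero_of_sum_ne_zero (mem_filter.mp ha).2
    simp only [mem_biUnion, mem_filter, mem_univ, true_and]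
    exact ⟨i, right_ne_zero_of_mul hi, left_ne_zero_of_mul hi⟩
  calc T (K *ᵥ ψ)
        ≤ ∑ i ∈ univ.filter (fun i => ψ i ≠ 0), (univ.filter fun a => K a i ≠ 0).card :=
        (card_le_card hsupp).trans card_biUnion_le
    _ ≤ ∑ i ∈ univ.filter (fun i => ψ i ≠ 0), 1 :=
        sum_le_sum fun i _ => card_le_one.mpr fun a ha b hb =>
          hcol i a b (mem_filter.mp ha).2 (mem_filter.mp hb).2
    _ = T ψ := by simp [T]

lemma IncoherentPreserving.eq_of_ne_zero [Fintype ι] [Fintype κ] [DecidableEq ι]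
    {K : Matrix κ ι ℂ} (hK : IncoherentPreserving K) {i : ι} {a b : κ} (ha : K a i ≠ 0)
    (hb : K b i ≠ 0) : a = b := by
  by_contra hab
  have hδ : IsIncoherent (diagonal (Pi.single i (1 : ℂ))) := by
    refine ⟨⟨PosSemidef.diagonal fun j => ?_, by simp [trace_diagonal]⟩, isDiag_diagonal _⟩
    by_cases hj : j = i <;> simp [hj]
  obtain ⟨c, -, δ', ⟨-, hδ'⟩, hKδ⟩ := hK _ hδ
  have hentry : (K * diagonal (Pi.single i (1 : ℂ)) * Kᴴ) a b = K a i * star (K b i) := by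
    rw [mul_apply]
    simp [mul_diagonal, Pi.single_apply]
  rw [hKδ, Matrix.smul_apply, hδ' hab, smul_zero] at hentry
  exact mul_ne_zero ha (star_ne_zero.mpr hb) hentry.symm

lemma exists_isDecomposition_of_finset [Fintype ι] {α : Type*} {ρ : Matrix ι ι ℂ} (s : Finset α)
    (p : α → ℝ) (ψ : α → ι → ℂ) (hp : ∀ a ∈ s, 0 < p a) (hsum : ∑ a ∈ s, p a = 1)
    (hψ : ∀ a ∈ s, ∑ i, Complex.normSq (ψ a i) = 1) (hρ : ρ = ∑ a ∈ s, p a • outer (ψ a)) :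
    ∃ n q φ, IsDecomposition ρ n q φ ∧ ∀ j, ∃ a ∈ s, φ j = ψ a := by
  let e : Fin s.card ≃ s := s.equivFin.symm
  refine ⟨s.card, fun j => p (e j), fun j => ψ (e j),
    ⟨fun j => hp _ (e j).2, ?_, fun j => hψ _ (e j).2, ?_⟩, fun j => ⟨e j, (e j).2, rfl⟩⟩
  · rw [← hsum, ← sum_coe_sort s, ← e.sum_comp]
  · rw [hρ, ← sum_coe_sort s, ← e.sum_comp]

lemma re_trace_sum_smul_outer [Fintype ι] {α : Type*} [Fintype α] (w : α → ℝ) (v : α → ι → ℂ) :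
    (∑ a, w a • outer (v a)).trace.re = ∑ a, w a * ∑ i, Complex.normSq (v a i) := by
  simp [trace_sum, trace_outer]

lemma exists_isDecomposition_of_eq_sum_outer [Fintype ι] {α : Type*} [Fintype α]
    {σ : Matrix ι ι ℂ} (w : α → ℝ) (v : α → ι → ℂ) (hw : ∀ a, 0 ≤ w a)
    (hσ : σ = ∑ a, w a • outer (v a)) (htr : σ.trace.re = 1) :
    ∃ n p ψ, IsDecomposition σ n p ψ ∧ ∀ j, ∃ a, T (ψ j) = T (v a) := by
  -- keep the terms with `w a ‖v a‖² > 0`, as `(w a ‖v a‖²) |v a / ‖v a‖⟩⟨v a / ‖v a‖|`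
  classical
  set ν : α → ℝ := fun a => ∑ i, Complex.normSq (v a i)
  have hν : ∀ a, 0 ≤ ν a := fun a => sum_nonneg fun i _ => Complex.normSq_nonneg _
  let s := univ.filter fun a => 0 < w a * ν a
  have hs : ∀ a ∈ s, 0 < ν a := fun a ha =>
    pos_of_mul_pos_right (mem_filter.mp ha).2 (hw a)
  have hvanish : ∀ a ∉ s, w a • outer (v a) = 0 := by
    intro a ha
    obtain hwa | hνa := mul_eq_zero.mp <|
      le_antisymm (not_lt.mp fun h => ha (mem_filter.mpr ⟨mem_univ a, h⟩))
        (mul_nonneg (hw a) (hν a))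
    · rw [hwa, zero_smul]
    · have : v a = 0 := funext fun i => Complex.normSq_eq_zero.mp <|
        (sum_eq_zero_iff_of_nonneg fun i _ => Complex.normSq_nonneg _).mp hνa i (mem_univ i)
      rw [this, outer_zero, smul_zero]
  have hsum : ∑ a ∈ s, w a * ν a = 1 := by
    rw [sum_filter_of_ne fun a _ h => (mul_nonneg (hw a) (hν a)).lt_of_ne' h, ← htr, hσ,
      re_trace_sum_smul_outer]
  have hnorm : ∀ a ∈ s, ∑ i, Complex.normSq (((√(ν a))⁻¹ • v a) i) = 1 := by
    intro a ha
    simp only [Pi.smul_apply, Complex.real_smul, Complex.normSq_mul, Complex.normSq_ofReal]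
    rw [← mul_sum, ← mul_inv, Real.mul_self_sqrt (hν a), inv_mul_cancel₀ (hs a ha).ne']
  have hσs : σ = ∑ a ∈ s, (w a * ν a) • outer ((√(ν a))⁻¹ • v a) := by
    rw [hσ, ← sum_subset (subset_univ s) fun a _ ha => hvanish a ha]
    refine sum_congr rfl fun a ha => ?_
    rw [outer_smul, smul_smul, inv_pow, Real.sq_sqrt (hν a), mul_assoc,
      mul_inv_cancel₀ (hs a ha).ne', mul_one]
  obtain ⟨n, p, ψ, hdec, hψ⟩ := exists_isDecomposition_of_finset s _ _
    (fun a ha => (mem_filter.mp ha).2) hsum hnorm hσs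
  refine ⟨n, p, ψ, hdec, fun j => ?_⟩
  obtain ⟨a, ha, hψa⟩ := hψ j
  exact ⟨a, hψa ▸ T_smul (inv_ne_zero (Real.sqrt_ne_zero'.mpr (hs a ha))) _⟩

lemma IsDecomposition.one_le_sup_T [Fintype ι] {ρ : Matrix ι ι ℂ} {n : ℕ} {p : Fin n → ℝ}
    {ψ : Fin n → ι → ℂ} (h : IsDecomposition ρ n p ψ) : 1 ≤ univ.sup fun j => T (ψ j) := by
  obtain ⟨-, hsum, hnorm, -⟩ := h
  obtain ⟨j⟩ : Nonempty (Fin n) := by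
    by_contra hempty
    simp [not_nonempty_iff.mp hempty] at hsum
  have hψ : ψ j ≠ 0 := by
    rintro hzero
    simpa [hzero] using hnorm j
  exact (T_pos hψ).trans_le (le_sup (f := fun j => T (ψ j)) (mem_univ j))

lemma C0_le_of_isDecomposition [Fintype ι] {ρ : Matrix ι ι ℂ} {n : ℕ} {p : Fin n → ℝ}
    {ψ : Fin n → ι → ℂ} (h : IsDecomposition ρ n p ψ) :
    C0 ρ ≤ Real.logb 2 (univ.sup fun j => T (ψ j) : ℕ) := by
  refine csInf_le ⟨0, ?_⟩ ⟨n, p, ψ, h, rfl⟩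
  rintro _ ⟨m, q, φ, hφ, rfl⟩
  exact Real.logb_nonneg one_lt_two (by exact_mod_cast hφ.one_le_sup_T)

lemma C0_le_logb_of_eq_sum_outer [Fintype ι] {α : Type*} [Fintype α] {σ : Matrix ι ι ℂ}
    (w : α → ℝ) (v : α → ι → ℂ) (hw : ∀ a, 0 ≤ w a) (hσ : σ = ∑ a, w a • outer (v a))
    (htr : σ.trace.re = 1) {M : ℕ} (hT : ∀ a, T (v a) ≤ M) : C0 σ ≤ Real.logb 2 M := by
  obtain ⟨n, p, ψ, hdec, hψ⟩ := exists_isDecomposition_of_eq_sum_outer w v hw hσ htr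
  have hsup : (univ.sup fun j => T (ψ j)) ≤ M :=
    Finset.sup_le fun j _ => by obtain ⟨a, ha⟩ := hψ j; exact ha ▸ hT a
  refine (C0_le_of_isDecomposition hdec).trans <|
    Real.logb_le_logb_of_le one_lt_two ?_ (by exact_mod_cast hsup)
  exact_mod_cast hdec.one_le_sup_T

lemma IsState.exists_isDecomposition [Fintype ι] [DecidableEq ι] {ρ : Matrix ι ι ℂ}
    (hρ : IsState ρ) : ∃ n p ψ, IsDecomposition ρ n p ψ := by
  obtain ⟨B, rfl⟩ := CStarAlgebra.nonneg_iff_eq_star_mul_self.mp hρ.1.nonneg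
  obtain ⟨n, p, ψ, hdec, -⟩ := exists_isDecomposition_of_eq_sum_outer (fun _ => 1)
    (fun k => star (B k)) (fun _ => zero_le_one)
    (by simpa using conjTranspose_mul_self_eq_sum_outer B)
    (by simpa [star_eq_conjTranspose] using congrArg Complex.re hρ.2)
  exact ⟨n, p, ψ, hdec⟩

lemma C0_conj_le_of_isDecomposition [Fintype ι] [Fintype κ] [DecidableEq ι]
    {K : Matrix κ ι ℂ} (hK : IncoherentPreserving K) {ρ : Matrix ι ι ℂ} {n : ℕ} {p : Fin n → ℝ}
    {ψ : Fin n → ι → ℂ} (hρ : IsDecomposition ρ n p ψ) (hP : 0 < (K * ρ * Kᴴ).trace.re) :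
    C0 ((((K * ρ * Kᴴ).trace.re)⁻¹ : ℝ) • (K * ρ * Kᴴ)) ≤
      Real.logb 2 (univ.sup fun j => T (ψ j) : ℕ) := by
  set P := (K * ρ * Kᴴ).trace.re
  have hKρ : K * ρ * Kᴴ = ∑ j, p j • outer (K *ᵥ ψ j) := by
    simp only [hρ.2.2.2, Matrix.mul_sum, Matrix.sum_mul, Matrix.mul_smul, Matrix.smul_mul,
      mul_outer_mul_conjTranspose]
  have hσ : P⁻¹ • (K * ρ * Kᴴ) = ∑ j, (P⁻¹ * p j) • outer (K *ᵥ ψ j) := by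
    simp only [hKρ, smul_sum, smul_smul]
  have htr : (P⁻¹ • (K * ρ * Kᴴ)).trace.re = 1 := by
    rw [trace_smul, Complex.smul_re, smul_eq_mul, inv_mul_cancel₀ hP.ne']
  have hcol : ∀ i a b, K a i ≠ 0 → K b i ≠ 0 → a = b := fun _ _ _ => hK.eq_of_ne_zero
  have hT (j : Fin n) : T (K *ᵥ ψ j) ≤ univ.sup fun j => T (ψ j) :=
    (T_mulVec_le hcol (ψ j)).trans (le_sup (f := fun j => T (ψ j)) (mem_univ j))
  exact C0_le_logb_of_eq_sum_outer _ _ (fun j => mul_nonneg (inv_nonneg.mpr hP.le) (hρ.1 j).le)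
    hσ htr hT

lemma sum_trace_mul_mul_conjTranspose [Fintype ι] [Fintype κ] [DecidableEq ι] {α : Type*}
    [Fintype α] {K : α → Matrix κ ι ℂ} (hK : ∑ a, (K a)ᴴ * K a = 1) (ρ : Matrix ι ι ℂ) :
    ∑ a, (K a * ρ * (K a)ᴴ).trace = ρ.trace := by
  simp_rw [trace_mul_cycle (K _), ← trace_sum, ← sum_mul, hK, one_mul]

/-- `C_0` is a monotone under selective incoherent operations:
`Σ_{n : p_n > 0} p_n C_0(K_n ρ K_n† / p_n) ≤ C_0(ρ)`. -/
theorem C0_selective_monotone {d : ℕ} (N : ℕ) (K : Fin N → Matrix (Fin d) (Fin d) ℂ)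
    (hK : ∀ n, IncoherentPreserving (K n)) (hsum : ∑ n, (K n)ᴴ * K n = 1)
    (ρ : Matrix (Fin d) (Fin d) ℂ) (hρ : IsState ρ) :
    ∑ n ∈ Finset.univ.filter (fun n => 0 < (K n * ρ * (K n)ᴴ).trace.re),
      (K n * ρ * (K n)ᴴ).trace.re *
        C0 ((((K n * ρ * (K n)ᴴ).trace.re)⁻¹ : ℝ) • (K n * ρ * (K n)ᴴ)) ≤ C0 ρ := by
  obtain ⟨m, p, ψ, hdec⟩ := hρ.exists_isDecomposition
  refine le_csInf ⟨_, m, p, ψ, hdec, rfl⟩ ?_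
  rintro _ ⟨m, p, ψ, hdec, rfl⟩
  have hP : ∀ n, 0 ≤ (K n * ρ * (K n)ᴴ).trace.re := fun n =>
    (Complex.nonneg_iff.mp (hρ.1.mul_mul_conjTranspose_same (K n)).trace_nonneg).1
  set L := Real.logb 2 (univ.sup fun j => T (ψ j) : ℕ)
  have hL : 0 ≤ L := Real.logb_nonneg one_lt_two (by exact_mod_cast hdec.one_le_sup_T)
  calc _ ≤ ∑ n ∈ univ.filter (fun n => 0 < (K n * ρ * (K n)ᴴ).trace.re),
        (K n * ρ * (K n)ᴴ).trace.re * L :=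
        sum_le_sum fun n hn => mul_le_mul_of_nonneg_left
          (C0_conj_le_of_isDecomposition (hK n) hdec (mem_filter.mp hn).2) (hP n)
    _ ≤ ∑ n, (K n * ρ * (K n)ᴴ).trace.re * L :=
        sum_le_sum_of_subset_of_nonneg (filter_subset _ _) fun n _ _ => mul_nonneg (hP n) hL
    _ = _ := by
        rw [← sum_mul, ← Complex.re_sum, sum_trace_mul_mul_conjTranspose hsum, hρ.2,
          Complex.one_re, one_mul]

end OneShot
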